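/- arXiv:math/0511536 — 3 statements merged into one kernel-verified Lean document; each statement's English description precedes it below -/
import Mathlib

section
/- There exist constants 0 < c ≤ C < ∞ (depending on Λ) and an integer b₀ such that for all b ≥ b₀: c R_b ≤ λ_b ≤ C R_b, where R_b := b² Λ([0,1/b]) + ∫_{[1/b,1]} x^{-2} dΛ(x) − b ∫_{[1/b, log(2(b−1)/(1−e^{−1}))/b)} x^{-1} (1−x)^{b−1} dΛ(x). -/
open MeasureTheory Finset Filter

/-- `lamBK μ b k` is `λ_{b,k} = ∫_{[0,1]} x^{k-2} (1-x)^{b-k} dΛ(x)`. -/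
noncomputable def lamBK (μ : Measure ℝ) (b k : ℕ) : ℝ :=
  ∫ x in Set.Icc (0:ℝ) 1, x ^ (k - 2) * (1 - x) ^ (b - k) ∂μ

/-- `lamB μ b` is `λ_b = Σ_{k=2}^b C(b,k) λ_{b,k}`. -/
noncomputable def lamB (μ : Measure ℝ) (b : ℕ) : ℝ :=
  ∑ k ∈ Finset.Icc 2 b, (b.choose k : ℝ) * lamBK μ b k

/-- `gamB μ b` is `γ_b = Σ_{k=2}^b C(b,k) (k-1) λ_{b,k}`. -/
noncomputable def gamB (μ : Measure ℝ) (b : ℕ) : ℝ :=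
  ∑ k ∈ Finset.Icc 2 b, (b.choose k : ℝ) * ((k : ℝ) - 1) * lamBK μ b k
/-- The comparison quantity `R_b` in Lemma 3 (i). -/
noncomputable def Rquant (μ : Measure ℝ) (b : ℕ) : ℝ :=
  (b : ℝ) ^ 2 * (μ (Set.Icc (0:ℝ) (1 / b))).toReal
    + (∫ x in Set.Icc (1 / (b:ℝ)) 1, 1 / x ^ 2 ∂μ)
    - (b : ℝ) * ∫ x in
        Set.Ico (1 / (b:ℝ)) (Real.log (2 * ((b:ℝ) - 1) / (1 - Real.exp (-1))) / b),
        (1 - x) ^ (b - 1) / x ∂μ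

/-! Write `λ_b = ∫_{[0,1]} G_b dΛ` with `G_b(x) = ∑_{k ≥ 2} C(b,k) x^(k-2) (1-x)^(b-k)`, so that
`x² G_b(x) = P(Bin(b, x) ≥ 2)`. For `x ≤ 1/b` this probability is of order `(bx)²`, so `G_b ≍ b²`;
for `x ≥ 1/b` it is at least `1/8` and at most `1 - P(Bin(b, x) = 1)`, so
`1/(8x²) ≤ G_b(x) ≤ 1/x² - b(1-x)^(b-1)/x`. Integrating against `Λ` gives `R_b / 24 ≤ λ_b ≤ R_b`
for `b ≥ 5`. The cutoff in `R_b` only has to be at most `1`: the subtracted term is dominated by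
the gap `1/x² - G_b(x)` for the upper bound and is nonnegative for the lower one. -/

open Real

noncomputable def lamBIntegrand (b : ℕ) (x : ℝ) : ℝ :=
  ∑ k ∈ Icc 2 b, (b.choose k : ℝ) * (x ^ (k - 2) * (1 - x) ^ (b - k))

lemma one_div_natCast_le_one (b : ℕ) : 1 / (b : ℝ) ≤ 1 := by
  rw [one_div]
  exact Nat.cast_inv_le_one b

lemma continuous_lamBIntegrand (b : ℕ) : Continuous (lamBIntegrand b) := by
  unfold lamBIntegrand
  fun_prop

lemma lamBIntegrand_nonneg (b : ℕ) {x : ℝ} (hx₀ : 0 ≤ x) (hx₁ : x ≤ 1) :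
    0 ≤ lamBIntegrand b x :=
  sum_nonneg fun k _ => by
    have : 0 ≤ 1 - x := by linarith
    positivity

lemma sq_mul_lamBIntegrand {b : ℕ} (hb : 2 ≤ b) (x : ℝ) :
    x ^ 2 * lamBIntegrand b x = 1 - (1 - x) ^ b - b * x * (1 - x) ^ (b - 1) := by
  have hbinom := add_pow x (1 - x) b
  rw [add_sub_cancel, one_pow, range_eq_Ico,
    ← sum_Ico_consecutive _ (Nat.zero_le 2) (by omega : 2 ≤ b + 1), Ico_add_one_right_eq_Icc,
    sum_Ico_eq_sum_range, sum_range_succ, sum_range_one] at hbinom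
  have hterm : ∀ k ∈ Icc 2 b, x ^ k * (1 - x) ^ (b - k) * (b.choose k : ℝ)
      = x ^ 2 * ((b.choose k : ℝ) * (x ^ (k - 2) * (1 - x) ^ (b - k))) := by
    intro k hk
    rw [← pow_mul_pow_sub x (mem_Icc.1 hk).1]
    ring
  rw [sum_congr rfl hterm, ← mul_sum] at hbinom
  simp only [zero_add, pow_zero, pow_one, Nat.sub_zero, Nat.choose_zero_right,
    Nat.choose_one_right, Nat.cast_one] at hbinom
  rw [lamBIntegrand]
  linear_combination -hbinom

lemma lamBIntegrand_le_choose_two {b : ℕ} (hb : 2 ≤ b) {x : ℝ} (hx₀ : 0 ≤ x) (hx₁ : x ≤ 1) :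
    lamBIntegrand b x ≤ b.choose 2 := by
  have hx' : 0 ≤ 1 - x := by linarith
  calc lamBIntegrand b x
      ≤ ∑ k ∈ Icc 2 b, (b.choose k * k.choose 2 : ℝ) * (x ^ (k - 2) * (1 - x) ^ (b - k)) := by
        refine sum_le_sum fun k hk => mul_le_mul_of_nonneg_right ?_ (by positivity)
        exact le_mul_of_one_le_right (by positivity)
          (by exact_mod_cast Nat.choose_pos (mem_Icc.1 hk).1)
    _ = b.choose 2 * ∑ k ∈ Icc 2 b,
          ((b - 2).choose (k - 2) : ℝ) * (x ^ (k - 2) * (1 - x) ^ (b - 2 - (k - 2))) := by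
        rw [mul_sum]
        refine sum_congr rfl fun k hk => ?_
        have h2k := (mem_Icc.1 hk).1
        have hchoose : (b.choose k * k.choose 2 : ℝ) = b.choose 2 * (b - 2).choose (k - 2) := by
          exact_mod_cast Nat.choose_mul h2k
        rw [hchoose, show b - 2 - (k - 2) = b - k by omega]
        ring
    _ = b.choose 2 := by
        rw [← Ico_add_one_right_eq_Icc, sum_Ico_eq_sum_range, show b + 1 - 2 = b - 2 + 1 by omega]
        simp only [add_tsub_cancel_left]
        conv_rhs => rw [← mul_one (b.choose 2 : ℝ), ← one_pow (b - 2), ← add_sub_cancel x 1,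
          add_pow]
        congr 1
        exact sum_congr rfl fun k _ => by ring

lemma choose_two_mul_one_sub_pow_le_lamBIntegrand {b : ℕ} (hb : 2 ≤ b) {x : ℝ} (hx₀ : 0 ≤ x)
    (hx₁ : x ≤ 1) : b.choose 2 * (1 - x) ^ (b - 2) ≤ lamBIntegrand b x := by
  have hx' : 0 ≤ 1 - x := by linarith
  calc b.choose 2 * (1 - x) ^ (b - 2) = b.choose 2 * (x ^ (2 - 2) * (1 - x) ^ (b - 2)) := by simp
    _ ≤ lamBIntegrand b x :=
      single_le_sum (f := fun k => (b.choose k : ℝ) * (x ^ (k - 2) * (1 - x) ^ (b - k)))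
        (fun k _ => by positivity) (mem_Icc.2 ⟨le_rfl, hb⟩)

lemma one_sub_pow_le_exp_neg_mul {x : ℝ} (hx : x ≤ 1) (n : ℕ) :
    (1 - x) ^ n ≤ exp (-(n * x)) := by
  rw [neg_mul_eq_mul_neg, exp_nat_mul]
  exact pow_le_pow_left₀ (by linarith) (one_sub_le_exp_neg x) n

lemma exp_neg_one_le_one_sub_inv_pow {b : ℕ} (hb : 2 ≤ b) :
    exp (-1) ≤ (1 - 1 / b) ^ (b - 1) := by
  obtain ⟨n, rfl⟩ : ∃ n, b = n + 2 := ⟨b - 2, by omega⟩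
  have hbase : (1 : ℝ) - 1 / ↑(n + 2) = (1 + (↑(n + 1) : ℝ)⁻¹)⁻¹ := by
    push_cast
    field_simp
    ring
  rw [hbase, show n + 2 - 1 = n + 1 by omega, inv_pow, exp_neg]
  exact inv_anti₀ (by positivity) one_add_inv_pow_le_exp

lemma sq_div_sixteen_le_lamBIntegrand {b : ℕ} (hb : 2 ≤ b) {x : ℝ} (hx₀ : 0 ≤ x)
    (hx : x ≤ 1 / b) : (b : ℝ) ^ 2 / 16 ≤ lamBIntegrand b x := by
  have hb' : (2 : ℝ) ≤ b := by exact_mod_cast hb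
  have hchoose : (b : ℝ) ^ 2 / 4 ≤ b.choose 2 := by
    rw [Nat.cast_choose_two]
    nlinarith
  have hinv₀ : 0 ≤ 1 / (b : ℝ) := by positivity
  have hinv₁ : 1 / (b : ℝ) ≤ 1 := one_div_natCast_le_one b
  have hx₁ : x ≤ 1 := hx.trans hinv₁
  have hpow : (1 : ℝ) / 4 ≤ (1 - x) ^ (b - 2) := by
    calc (1 : ℝ) / 4 ≤ exp (-1) := le_trans (by norm_num) exp_neg_one_gt_d9.le
      _ ≤ (1 - 1 / b) ^ (b - 1) := exp_neg_one_le_one_sub_inv_pow hb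
      _ ≤ (1 - 1 / b) ^ (b - 2) := pow_le_pow_of_le_one (by linarith) (by linarith) (by omega)
      _ ≤ (1 - x) ^ (b - 2) := pow_le_pow_left₀ (by linarith) (by linarith) _
  calc (b : ℝ) ^ 2 / 16 = (b : ℝ) ^ 2 / 4 * (1 / 4) := by ring
    _ ≤ b.choose 2 * (1 - x) ^ (b - 2) := mul_le_mul hchoose hpow (by norm_num) (by positivity)
    _ ≤ lamBIntegrand b x := choose_two_mul_one_sub_pow_le_lamBIntegrand hb hx₀ hx₁

lemma one_sub_pow_add_mul_one_sub_pow_le {b : ℕ} (hb : 5 ≤ b) {x : ℝ} (hx : 1 / b ≤ x)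
    (hx₁ : x ≤ 1) : (1 - x) ^ b + b * x * (1 - x) ^ (b - 1) ≤ 7 / 8 := by
  have hb' : (5 : ℝ) ≤ b := by exact_mod_cast hb
  have hbx : 1 ≤ b * x := by rwa [div_le_iff₀' (by positivity)] at hx
  have hx₀ : 0 ≤ x := le_trans (by positivity) hx
  have hcast : ((b - 1 : ℕ) : ℝ) = b - 1 := by rw [Nat.cast_sub (by omega)]; simp
  have hfirst : (1 - x) ^ b ≤ exp (-1) :=
    (one_sub_pow_le_exp_neg_mul hx₁ b).trans (exp_le_exp.2 (by linarith))
  have hsecond : b * x * (1 - x) ^ (b - 1) ≤ 5 / 4 * exp (-1) := by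
    calc b * x * (1 - x) ^ (b - 1) ≤ 5 / 4 * ((b - 1) * x) * exp (-((b - 1) * x)) := by
          have hpow := one_sub_pow_le_exp_neg_mul hx₁ (b - 1)
          rw [hcast] at hpow
          exact mul_le_mul (by nlinarith) hpow (pow_nonneg (by linarith) _) (by nlinarith)
      _ = 5 / 4 * (((b - 1) * x) * exp (-((b - 1) * x))) := by ring
      _ ≤ 5 / 4 * exp (-1) := by gcongr; exact mul_exp_neg_le_exp_neg_one _
  have he : exp (-1) < 7 / 18 := lt_trans exp_neg_one_lt_d9 (by norm_num)
  linarith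

lemma inv_sq_le_eight_mul_lamBIntegrand {b : ℕ} (hb : 5 ≤ b) {x : ℝ} (hx : 1 / b ≤ x)
    (hx₁ : x ≤ 1) : 1 / x ^ 2 ≤ 8 * lamBIntegrand b x := by
  have hx₀ : 0 < x := lt_of_lt_of_le (by positivity) hx
  rw [div_le_iff₀ (by positivity)]
  linarith [sq_mul_lamBIntegrand (by omega : 2 ≤ b) x, one_sub_pow_add_mul_one_sub_pow_le hb hx hx₁]

lemma lamBIntegrand_le_inv_sq_sub {b : ℕ} (hb : 2 ≤ b) {x : ℝ} (hx₀ : 0 < x) (hx₁ : x ≤ 1) :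
    lamBIntegrand b x ≤ 1 / x ^ 2 - b * ((1 - x) ^ (b - 1) / x) := by
  have hsq := sq_mul_lamBIntegrand hb x
  have : 0 ≤ (1 - x) ^ b := pow_nonneg (by linarith) b
  rw [show 1 / x ^ 2 - b * ((1 - x) ^ (b - 1) / x) = (1 - b * x * (1 - x) ^ (b - 1)) / x ^ 2 by
    field_simp, le_div_iff₀ (by positivity)]
  linarith

noncomputable def rquantCutoff (b : ℕ) : ℝ :=
  log (2 * ((b : ℝ) - 1) / (1 - exp (-1))) / b

lemma rquantCutoff_le_one {b : ℕ} (hb : 2 ≤ b) : rquantCutoff b ≤ 1 := by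
  have hb' : (2 : ℝ) ≤ b := by exact_mod_cast hb
  have hden : 1 / 2 ≤ 1 - exp (-1) := by linarith [exp_neg_one_lt_d9]
  rw [rquantCutoff, div_le_one (by positivity), log_le_iff_le_exp (by
    exact div_pos (by linarith) (by linarith))]
  calc 2 * ((b : ℝ) - 1) / (1 - exp (-1)) ≤ 4 * (b - 1) := by
        rw [div_le_iff₀ (by linarith)]
        nlinarith
    _ ≤ 1 + b + b ^ 2 / 2 := by nlinarith [sq_nonneg ((b : ℝ) - 3)]
    _ ≤ exp b := quadratic_le_exp_of_nonneg (by positivity)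

lemma Rquant_def (μ : Measure ℝ) (b : ℕ) :
    Rquant μ b = (b : ℝ) ^ 2 * (μ (Set.Icc 0 (1 / b))).toReal
      + (∫ x in Set.Icc (1 / (b : ℝ)) 1, 1 / x ^ 2 ∂μ)
      - b * ∫ x in Set.Ico (1 / (b : ℝ)) (rquantCutoff b), (1 - x) ^ (b - 1) / x ∂μ :=
  rfl

lemma setIntegral_one_sub_pow_div_nonneg (μ : Measure ℝ) (n : ℕ) {t T : ℝ} (ht : 0 < t)
    (hT : T ≤ 1) : 0 ≤ ∫ x in Set.Ico t T, (1 - x) ^ n / x ∂μ := by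
  refine setIntegral_nonneg measurableSet_Ico fun x hx => ?_
  have : 0 ≤ 1 - x := by linarith [hx.2]
  have : 0 < x := ht.trans_le hx.1
  positivity

section Integrals

variable (μ : Measure ℝ) [IsLocallyFiniteMeasure μ]

lemma integrableOn_lamBIntegrand (b : ℕ) : IntegrableOn (lamBIntegrand b) (Set.Icc 0 1) μ :=
  (continuous_lamBIntegrand b).integrableOn_Icc

lemma integrableOn_one_div_sq_Icc {t : ℝ} (ht : 0 < t) :
    IntegrableOn (fun x : ℝ => 1 / x ^ 2) (Set.Icc t 1) μ :=
  ContinuousOn.integrableOn_Icc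
    (by fun_prop (disch := exact fun x hx => pow_ne_zero 2 (ht.trans_le hx.1).ne'))

lemma lamB_eq_integral (b : ℕ) : lamB μ b = ∫ x in Set.Icc 0 1, lamBIntegrand b x ∂μ := by
  unfold lamB lamBK lamBIntegrand
  rw [integral_finsetSum _ fun k _ => (by fun_prop : Continuous _).integrableOn_Icc]
  simp only [integral_const_mul]

lemma setIntegral_lamBIntegrand_le_lamB (b : ℕ) {s : Set ℝ} (hs : s ⊆ Set.Icc 0 1) :
    ∫ x in s, lamBIntegrand b x ∂μ ≤ lamB μ b := by
  rw [lamB_eq_integral]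
  refine setIntegral_mono_set (integrableOn_lamBIntegrand μ b) ?_ hs.eventuallyLE
  filter_upwards [ae_restrict_mem measurableSet_Icc] with x hx
  exact lamBIntegrand_nonneg b hx.1 hx.2

lemma setIntegral_lamBIntegrand_Ico_le {b : ℕ} (hb : 2 ≤ b) {t : ℝ} (ht : t ≤ 1) :
    ∫ x in Set.Ico 0 t, lamBIntegrand b x ∂μ ≤ (b : ℝ) ^ 2 * (μ (Set.Icc 0 t)).toReal := by
  have hsub : Set.Ico 0 t ⊆ Set.Icc 0 1 := fun x hx => ⟨hx.1, hx.2.le.trans ht⟩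
  have hchoose : (b.choose 2 : ℝ) ≤ b ^ 2 := by
    rw [Nat.cast_choose_two]
    nlinarith [(b.cast_nonneg : (0 : ℝ) ≤ b)]
  calc ∫ x in Set.Ico 0 t, lamBIntegrand b x ∂μ ≤ ∫ _ in Set.Ico 0 t, (b : ℝ) ^ 2 ∂μ :=
        setIntegral_mono_on ((integrableOn_lamBIntegrand μ b).mono_set hsub)
          (integrableOn_const measure_Ico_lt_top.ne) measurableSet_Ico fun x hx =>
            (lamBIntegrand_le_choose_two hb (hsub hx).1 (hsub hx).2).trans hchoose
    _ = (b : ℝ) ^ 2 * μ.real (Set.Ico 0 t) := by rw [setIntegral_const, smul_eq_mul, mul_comm]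
    _ ≤ (b : ℝ) ^ 2 * (μ (Set.Icc 0 t)).toReal := by
        gcongr
        exact measureReal_mono Set.Ico_subset_Icc_self measure_Icc_lt_top.ne

lemma setIntegral_lamBIntegrand_Icc_le {b : ℕ} (hb : 2 ≤ b) {t T : ℝ} (ht : 0 < t) (hT : T ≤ 1) :
    ∫ x in Set.Icc t 1, lamBIntegrand b x ∂μ ≤ (∫ x in Set.Icc t 1, 1 / x ^ 2 ∂μ)
      - b * ∫ x in Set.Ico t T, (1 - x) ^ (b - 1) / x ∂μ := by
  set f : ℝ → ℝ := fun x => b * ((1 - x) ^ (b - 1) / x)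
  have hpos : ∀ x ∈ Set.Icc t 1, x ≠ 0 := fun x hx => (ht.trans_le hx.1).ne'
  have hinv := integrableOn_one_div_sq_Icc μ ht
  have hf : IntegrableOn f (Set.Icc t 1) μ :=
    ContinuousOn.integrableOn_Icc (by fun_prop (disch := exact hpos))
  have hinter : Set.Icc t 1 ∩ Set.Iio T = Set.Ico t T :=
    Set.ext fun x => ⟨fun ⟨⟨htx, _⟩, hxT⟩ => ⟨htx, hxT⟩,
      fun ⟨htx, hxT⟩ => ⟨⟨htx, hxT.le.trans hT⟩, hxT⟩⟩
  have hpointwise : ∀ x ∈ Set.Icc t 1,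
      lamBIntegrand b x ≤ 1 / x ^ 2 - (Set.Iio T).indicator f x := by
    intro x hx
    have hx₀ : 0 < x := ht.trans_le hx.1
    have hle := lamBIntegrand_le_inv_sq_sub hb hx₀ hx.2
    have hf₀ : 0 ≤ f x := by
      have : 0 ≤ 1 - x := by linarith [hx.2]
      positivity
    by_cases hxT : x < T
    · rwa [Set.indicator_of_mem (Set.mem_Iio.2 hxT)]
    · rw [Set.indicator_of_notMem (fun h => hxT (Set.mem_Iio.1 h))]
      linarith
  calc ∫ x in Set.Icc t 1, lamBIntegrand b x ∂μ
      ≤ ∫ x in Set.Icc t 1, (1 / x ^ 2 - (Set.Iio T).indicator f x) ∂μ :=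
        setIntegral_mono_on ((integrableOn_lamBIntegrand μ b).mono_set
          (Set.Icc_subset_Icc_left ht.le)) (hinv.sub (hf.indicator measurableSet_Iio))
          measurableSet_Icc hpointwise
    _ = (∫ x in Set.Icc t 1, 1 / x ^ 2 ∂μ) - b * ∫ x in Set.Ico t T, (1 - x) ^ (b - 1) / x ∂μ := by
        rw [integral_sub hinv (hf.indicator measurableSet_Iio),
          setIntegral_indicator measurableSet_Iio, hinter, integral_const_mul]

lemma lamB_le_Rquant {b : ℕ} (hb : 2 ≤ b) : lamB μ b ≤ Rquant μ b := by
  have ht₀ : (0 : ℝ) < 1 / b := by positivity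
  have ht₁ := one_div_natCast_le_one b
  have hG := integrableOn_lamBIntegrand μ b
  rw [lamB_eq_integral, Rquant_def, ← Set.Ico_union_Icc_eq_Icc ht₀.le ht₁,
    setIntegral_union (Set.disjoint_left.2 fun x hx hx' => (not_le.2 hx.2) hx'.1)
      measurableSet_Icc (hG.mono_set (Set.Ico_subset_Icc_self.trans (Set.Icc_subset_Icc_right ht₁)))
      (hG.mono_set (Set.Icc_subset_Icc_left ht₀.le))]
  linarith [setIntegral_lamBIntegrand_Ico_le μ hb ht₁,
    setIntegral_lamBIntegrand_Icc_le μ hb ht₀ (rquantCutoff_le_one hb)]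

lemma sq_mul_measure_le_lamB {b : ℕ} (hb : 2 ≤ b) :
    (b : ℝ) ^ 2 * (μ (Set.Icc 0 (1 / b))).toReal ≤ 16 * lamB μ b := by
  have hsub : Set.Icc 0 (1 / (b : ℝ)) ⊆ Set.Icc 0 1 :=
    Set.Icc_subset_Icc_right (one_div_natCast_le_one b)
  have hle := setIntegral_ge_of_const_le_real measurableSet_Icc measure_Icc_lt_top.ne
    (fun x hx => sq_div_sixteen_le_lamBIntegrand hb hx.1 hx.2)
    ((integrableOn_lamBIntegrand μ b).mono_set hsub)
  have := setIntegral_lamBIntegrand_le_lamB μ b hsub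
  rw [Measure.real] at hle
  linarith

lemma setIntegral_inv_sq_le_lamB {b : ℕ} (hb : 5 ≤ b) :
    ∫ x in Set.Icc (1 / (b : ℝ)) 1, 1 / x ^ 2 ∂μ ≤ 8 * lamB μ b := by
  have hsub : Set.Icc (1 / (b : ℝ)) 1 ⊆ Set.Icc 0 1 := Set.Icc_subset_Icc_left (by positivity)
  calc ∫ x in Set.Icc (1 / (b : ℝ)) 1, 1 / x ^ 2 ∂μ
      ≤ ∫ x in Set.Icc (1 / (b : ℝ)) 1, 8 * lamBIntegrand b x ∂μ := by
        refine setIntegral_mono_on (integrableOn_one_div_sq_Icc μ (by positivity))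
          (((integrableOn_lamBIntegrand μ b).mono_set hsub).const_mul 8) measurableSet_Icc
          fun x hx => inv_sq_le_eight_mul_lamBIntegrand hb hx.1 hx.2
    _ ≤ 8 * lamB μ b := by
        rw [integral_const_mul]
        linarith [setIntegral_lamBIntegrand_le_lamB μ b hsub]

lemma Rquant_le_lamB {b : ℕ} (hb : 5 ≤ b) : Rquant μ b ≤ 24 * lamB μ b := by
  have hcut := setIntegral_one_sub_pow_div_nonneg μ (b - 1) (by positivity : (0 : ℝ) < 1 / b)
    (rquantCutoff_le_one (by omega : 2 ≤ b))
  rw [Rquant_def]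
  linarith [sq_mul_measure_le_lamB μ (by omega : 2 ≤ b), setIntegral_inv_sq_le_lamB μ hb,
    mul_nonneg (b.cast_nonneg : (0 : ℝ) ≤ b) hcut]

end Integrals

theorem lamB_asymp_general (μ : Measure ℝ) [IsFiniteMeasure μ] :
    ∃ c C : ℝ, 0 < c ∧ c ≤ C ∧ ∃ b₀ : ℕ, ∀ b : ℕ, b₀ ≤ b →
      c * Rquant μ b ≤ lamB μ b ∧ lamB μ b ≤ C * Rquant μ b := by
  refine ⟨1 / 24, 1, by norm_num, by norm_num, 5, fun b hb => ⟨?_, ?_⟩⟩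
  · linarith [Rquant_le_lamB μ hb]
  · linarith [lamB_le_Rquant μ (by omega : 2 ≤ b)]

theorem lamB_asymp (μ : Measure ℝ) [IsFiniteMeasure μ]
    (h0 : μ {0} = 0) (h1 : μ {1} = 0)
    (hsupp : μ ((Set.Icc (0:ℝ) 1)ᶜ) = 0) (hpos : 0 < μ (Set.Icc (0:ℝ) 1)) :
    ∃ c C : ℝ, 0 < c ∧ c ≤ C ∧ ∃ b₀ : ℕ, ∀ b : ℕ, b₀ ≤ b →
      c * Rquant μ b ≤ lamB μ b ∧ lamB μ b ≤ C * Rquant μ b :=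
  lamB_asymp_general μ
end

section
/- For all integers υ ≥ 1 and nonnegative integers b_1, …, b_υ with Σ_{i=1}^υ b_i > υ: γ_{Σ_{i=1}^υ b_i} ≥ Σ_{i=1}^υ γ_{b_i} ≥ υ γ_{⌊Σ_{i=1}^υ b_i / υ⌋}. -/
/-
Proof idea: `γ_b = ∫ G_b dΛ` with `G_b(x) = Σ_{k=2}^b C(b,k) (k-1) x^{k-2} (1-x)^{b-k}`, and
the mean of the binomial distribution gives `x² G_b(x) = b x - 1 + (1-x)^b`. Hence
`G_{b+1} - G_b = Σ_{j<b} (1-x)^j`, so the increments `γ_{b+1} - γ_b = Σ_{j<b} ∫ (1-x)^j dΛ`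
are nonnegative and nondecreasing in `b`: `γ` is a nondecreasing convex sequence with `γ_0 = 0`.
Convexity and `γ_0 = 0` give superadditivity, which is the first inequality. For the second,
sum the tangent-line bound `γ_n ≥ γ_m + (n - m) (γ_{m+1} - γ_m)` at `m = ⌊Σ b_i / υ⌋` over
`n = b_i`, and use `Σ b_i ≥ υ m` and `γ_{m+1} ≥ γ_m`.
-/

open MeasureTheory Finset fwdDiff

section ConvexSequence

variable {g : ℕ → ℝ}

lemma add_mul_fwdDiff_le_of_monotone (hg : Monotone (Δ_[1] g)) (m k : ℕ) :
    g m + k * Δ_[1] g m ≤ g (m + k) := by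
  induction k with
  | zero => simp
  | succ k ih =>
    have hstep : Δ_[1] g m ≤ Δ_[1] g (m + k) := hg (Nat.le_add_right m k)
    simp only [fwdDiff, ← add_assoc] at hstep ih ⊢
    push_cast
    linarith

lemma le_add_mul_fwdDiff_of_monotone (hg : Monotone (Δ_[1] g)) (n k : ℕ) :
    g (n + k) ≤ g n + k * Δ_[1] g (n + k) := by
  induction k with
  | zero => simp
  | succ k ih =>
    have hstep : Δ_[1] g (n + k) ≤ Δ_[1] g (n + (k + 1)) := hg (by omega)
    have hk : (0 : ℝ) ≤ k := k.cast_nonneg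
    simp only [fwdDiff, ← add_assoc] at hstep ih ⊢
    push_cast
    nlinarith

lemma add_sub_mul_fwdDiff_le_of_monotone (hg : Monotone (Δ_[1] g)) (m n : ℕ) :
    g m + ((n : ℝ) - m) * Δ_[1] g m ≤ g n := by
  rcases le_total m n with hmn | hnm
  · obtain ⟨k, rfl⟩ := Nat.exists_eq_add_of_le hmn
    push_cast
    simpa using add_mul_fwdDiff_le_of_monotone hg m k
  · obtain ⟨k, rfl⟩ := Nat.exists_eq_add_of_le hnm
    push_cast
    linarith [le_add_mul_fwdDiff_of_monotone hg n k]

lemma add_le_add_apply_zero_of_monotone_fwdDiff (hg : Monotone (Δ_[1] g)) (a c : ℕ) :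
    g a + g c ≤ g (a + c) + g 0 := by
  induction a with
  | zero => simp [add_comm]
  | succ a ih =>
    have hstep : Δ_[1] g a ≤ Δ_[1] g (a + c) := hg (Nat.le_add_right a c)
    simp only [fwdDiff] at hstep
    rw [Nat.add_right_comm]
    linarith

lemma sum_le_apply_sum_of_monotone_fwdDiff {ι : Type*} (hg : Monotone (Δ_[1] g)) (hg0 : g 0 = 0)
    (s : Finset ι) (b : ι → ℕ) : ∑ i ∈ s, g (b i) ≤ g (∑ i ∈ s, b i) := by
  have hneg := le_sum_of_subadditive (fun n => -g n) (by simp [hg0])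
    (fun a c => by linarith [add_le_add_apply_zero_of_monotone_fwdDiff hg a c]) s b
  simpa [sum_neg_distrib] using hneg

lemma card_mul_apply_sum_div_card_le_sum (hg : Monotone (Δ_[1] g)) (hg_mono : Monotone g)
    {ι : Type*} (s : Finset ι) (b : ι → ℕ) :
    (#s : ℝ) * g ((∑ i ∈ s, b i) / #s) ≤ ∑ i ∈ s, g (b i) := by
  set m := (∑ i ∈ s, b i) / #s
  have hm : (#s : ℝ) * m ≤ ∑ i ∈ s, (b i : ℝ) := by
    exact_mod_cast (Nat.div_mul_le_self _ _).trans_eq' (mul_comm _ _)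
  have hd : 0 ≤ Δ_[1] g m := sub_nonneg.mpr (hg_mono m.le_succ)
  calc (#s : ℝ) * g m ≤ ∑ i ∈ s, (g m + ((b i : ℝ) - m) * Δ_[1] g m) := by
        rw [sum_add_distrib, ← sum_mul, sum_sub_distrib, sum_const, nsmul_eq_mul, sum_const,
          nsmul_eq_mul]
        nlinarith
    _ ≤ ∑ i ∈ s, g (b i) :=
        sum_le_sum fun i _ => add_sub_mul_fwdDiff_le_of_monotone hg m (b i)

end ConvexSequence

noncomputable def gamBKernel (b : ℕ) (x : ℝ) : ℝ :=
  ∑ k ∈ Icc 2 b, (b.choose k : ℝ) * ((k : ℝ) - 1) * (x ^ (k - 2) * (1 - x) ^ (b - k))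

lemma continuous_gamBKernel (b : ℕ) : Continuous (gamBKernel b) :=
  continuous_finsetSum _ fun _ _ => by fun_prop

lemma gamB_eq_integral_gamBKernel (μ : Measure ℝ) [IsFiniteMeasureOnCompacts μ] (b : ℕ) :
    gamB μ b = ∫ x in Set.Icc 0 1, gamBKernel b x ∂μ := by
  simp only [gamB, lamBK, gamBKernel]
  rw [integral_finsetSum _ fun k _ => Continuous.integrableOn_Icc (by fun_prop)]
  exact sum_congr rfl fun k _ => (integral_const_mul _ _).symm

/-- Summing `(k - 1)` against the binomial distribution `Bin(b, x)` gives `b x - 1`; the terms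
`k = 0, 1` are the ones missing from `gamBKernel`. -/
lemma sq_mul_gamBKernel (b : ℕ) (x : ℝ) :
    x ^ 2 * gamBKernel b x = b * x - 1 + (1 - x) ^ b := by
  have hbern : ∑ k ∈ range (b + 1), ((k : ℝ) - 1) * (b.choose k * x ^ k * (1 - x) ^ (b - k))
      = b * x - 1 := by
    have hmean := congrArg (Polynomial.eval x) (bernsteinPolynomial.sum_smul ℝ b)
    have htotal := congrArg (Polynomial.eval x) (bernsteinPolynomial.sum ℝ b)
    simp only [Polynomial.eval_finsetSum, bernsteinPolynomial,
      Polynomial.eval_mul, Polynomial.eval_pow, Polynomial.eval_sub, Polynomial.eval_one,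
      Polynomial.eval_X, Polynomial.eval_natCast, nsmul_eq_mul] at hmean htotal
    simp only [sub_mul, one_mul, sum_sub_distrib, hmean, htotal]
  rw [range_eq_Ico, sum_eq_sum_Ico_succ_bot b.succ_pos,
    ← sum_subset (Ico_subset_Ico_left (Nat.le_succ 1)) ?_] at hbern
  · have hterm : ∀ k ∈ Icc 2 b,
        x ^ 2 * (b.choose k * ((k : ℝ) - 1) * (x ^ (k - 2) * (1 - x) ^ (b - k)))
          = ((k : ℝ) - 1) * (b.choose k * x ^ k * (1 - x) ^ (b - k)) := fun k hk => by
      obtain ⟨j, rfl⟩ := Nat.exists_eq_add_of_le (mem_Icc.mp hk).1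
      rw [Nat.add_sub_cancel_left]
      ring
    rw [gamBKernel, mul_sum, sum_congr rfl hterm]
    simp only [Nat.cast_zero, Nat.choose_zero_right, Nat.cast_one, pow_zero, Nat.sub_zero] at hbern
    change _ + ∑ k ∈ Icc 2 b, _ = _ at hbern
    linarith
  · intro k hk hk'
    obtain rfl : k = 1 := by simp only [mem_Ico] at hk hk'; omega
    simp

/-- Cancel `x ^ 2` in `sq_mul_gamBKernel` off `x = 0`; continuity covers `x = 0`. -/
lemma gamBKernel_succ (n : ℕ) (x : ℝ) :
    gamBKernel (n + 1) x = gamBKernel n x + ∑ j ∈ range n, (1 - x) ^ j := by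
  refine congrFun ((continuous_gamBKernel (n + 1)).ext_on (dense_compl_singleton 0)
    (g := fun y => gamBKernel n y + ∑ j ∈ range n, (1 - y) ^ j)
    ((continuous_gamBKernel n).add (by fun_prop)) fun y (hy : y ≠ 0) => ?_) x
  have hgeom := geom_sum_mul (1 - y) n
  refine mul_left_cancel₀ (pow_ne_zero 2 hy) ?_
  rw [mul_add, sq_mul_gamBKernel, sq_mul_gamBKernel]
  push_cast
  linear_combination y * hgeom

lemma gamB_zero (μ : Measure ℝ) : gamB μ 0 = 0 := by simp [gamB]

lemma integral_one_sub_pow_nonneg (μ : Measure ℝ) (j : ℕ) :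
    0 ≤ ∫ x in Set.Icc 0 1, (1 - x) ^ j ∂μ :=
  setIntegral_nonneg measurableSet_Icc fun _ hx => pow_nonneg (sub_nonneg.mpr hx.2) j

section

variable (μ : Measure ℝ) [IsFiniteMeasureOnCompacts μ]

lemma gamB_succ_sub (n : ℕ) :
    gamB μ (n + 1) - gamB μ n = ∑ j ∈ range n, ∫ x in Set.Icc 0 1, (1 - x) ^ j ∂μ := by
  simp only [gamB_eq_integral_gamBKernel, gamBKernel_succ]
  rw [integral_add ((continuous_gamBKernel n).integrableOn_Icc)
    (Continuous.integrableOn_Icc (by fun_prop)), integral_finsetSum _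
    fun j _ => Continuous.integrableOn_Icc (by fun_prop)]
  ring

lemma monotone_gamB : Monotone (gamB μ) :=
  monotone_nat_of_le_succ fun n => by
    rw [← sub_nonneg, gamB_succ_sub]
    exact sum_nonneg fun j _ => integral_one_sub_pow_nonneg μ j

lemma monotone_fwdDiff_gamB : Monotone (Δ_[1] (gamB μ)) := fun m n hmn => by
  simp only [fwdDiff, gamB_succ_sub]
  exact sum_le_sum_of_subset_of_nonneg (range_mono hmn) fun j _ _ =>
    integral_one_sub_pow_nonneg μ j

end

theorem gamB_spatial_estimate_general (μ : Measure ℝ) [IsFiniteMeasure μ]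
    (υ : ℕ) (b : Fin υ → ℕ) :
    (∑ i, gamB μ (b i)) ≤ gamB μ (∑ i, b i) ∧
      (υ : ℝ) * gamB μ ((∑ i, b i) / υ) ≤ ∑ i, gamB μ (b i) := by
  have hconvex := monotone_fwdDiff_gamB μ
  refine ⟨sum_le_apply_sum_of_monotone_fwdDiff hconvex (gamB_zero μ) univ b, ?_⟩
  simpa using card_mul_apply_sum_div_card_le_sum hconvex (monotone_gamB μ) univ b

theorem gamB_spatial_estimate (μ : Measure ℝ) [IsFiniteMeasure μ]
    (h0 : μ {0} = 0) (h1 : μ {1} = 0)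
    (hsupp : μ ((Set.Icc (0:ℝ) 1)ᶜ) = 0) (hpos : 0 < μ (Set.Icc (0:ℝ) 1))
    (υ : ℕ) (hυ : 1 ≤ υ) (b : Fin υ → ℕ) (hsum : υ < ∑ i, b i) :
    (∑ i, gamB μ (b i)) ≤ gamB μ (∑ i, b i) ∧
      (υ : ℝ) * gamB μ ((∑ i, b i) / υ) ≤ ∑ i, gamB μ (b i) :=
  gamB_spatial_estimate_general μ υ b
end

section
/- Fix an integer υ ≥ 1 and let m, n be positive integers with n ≥ 2 and nυ ≤ m < (n+1)υ. Then for every integer k ≥ 1 and positive integers j_1, …, j_k satisfying Σ_{i=1}^{k-1} j_i < m − 2υ and m − 2υ ≤ Σ_{i=1}^k j_i ≤ m − 1, one has Σ_{i=1}^k j_i / γ_{⌊(m − Σ_{ℓ=1}^{i-1} j_ℓ)/υ⌋} ≤ (m − nυ)/γ_n + Σ_{b=2}^{n-1} υ/γ_b + 2υ/γ_2. -/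
open MeasureTheory Finset Filter

/-!
The measure-theoretic input is that `γ` is nondecreasing from `b = 2` on and `γ₂ = Λ[0,1] > 0`.
Indeed `γ_b = ∫ p_b dΛ` for `p_b = gamPoly b`, and the mean of the binomial distribution gives
`x² p_b(x) = bx - 1 + (1-x)^b`, whence `x² (p_{b+1} - p_b)(x) = x (1 - (1-x)^b) ≥ 0`; so
`p_b ≤ p_{b+1}` on `(0,1]`, and at `0` by continuity.

The rest only uses these two properties. With `S_i = j_0 + ⋯ + j_{i-1}` and the weight
`w(s) = 1/γ(max 2 ⌊s/υ⌋)`, which is antitone, the term `j_i / γ(⌊(m - S_i)/υ⌋)` is at most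
`Σ_{S_i ≤ t < S_{i+1}} w(m - t)`, since `⌊(m - S_i)/υ⌋ ≥ 2`. Hence the whole sum is at most
`Σ_{s=1}^m w(s)`, and each block of `υ` consecutive `s` with `⌊s/υ⌋ = b` contributes `υ/γ_b`.
-/

lemma sum_choose_mul_sub_one_mul_pow (b : ℕ) (x : ℝ) :
    ∑ k ∈ range (b + 1), (b.choose k : ℝ) * ((k : ℝ) - 1) * (x ^ k * (1 - x) ^ (b - k))
      = b * x - 1 := by
  have hsum := congrArg (Polynomial.eval x) (bernsteinPolynomial.sum ℝ b)
  have hmean := congrArg (Polynomial.eval x) (bernsteinPolynomial.sum_smul ℝ b)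
  simp only [Polynomial.eval_finsetSum, bernsteinPolynomial, Polynomial.eval_mul,
    Polynomial.eval_pow, Polynomial.eval_sub, Polynomial.eval_natCast, Polynomial.eval_X,
    Polynomial.eval_one, nsmul_eq_mul] at hsum hmean
  calc _ = ∑ k ∈ range (b + 1), (k : ℝ) * ((b.choose k : ℝ) * x ^ k * (1 - x) ^ (b - k))
        - ∑ k ∈ range (b + 1), (b.choose k : ℝ) * x ^ k * (1 - x) ^ (b - k) := by
        rw [← sum_sub_distrib]; exact sum_congr rfl fun k _ => by ring
    _ = b * x - 1 := by rw [hsum, hmean]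

def gamPoly (b : ℕ) (x : ℝ) : ℝ :=
  ∑ k ∈ Icc 2 b, (b.choose k : ℝ) * ((k : ℝ) - 1) * (x ^ (k - 2) * (1 - x) ^ (b - k))

lemma continuous_gamPoly (b : ℕ) : Continuous (gamPoly b) := by
  unfold gamPoly; fun_prop

lemma sq_mul_gamPoly {b : ℕ} (hb : 2 ≤ b) (x : ℝ) :
    x ^ 2 * gamPoly b x = b * x - 1 + (1 - x) ^ b := by
  have hsum := sum_choose_mul_sub_one_mul_pow b x
  rw [range_eq_Ico, ← sum_Ico_consecutive _ (Nat.zero_le 2) (by omega : 2 ≤ b + 1),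
    Ico_add_one_right_eq_Icc, Nat.Ico_zero_eq_range] at hsum
  simp only [sum_range_succ, range_zero, sum_empty] at hsum
  have hterm : ∀ k ∈ Icc 2 b, x ^ 2 * ((b.choose k : ℝ) * ((k : ℝ) - 1) *
      (x ^ (k - 2) * (1 - x) ^ (b - k)))
      = (b.choose k : ℝ) * ((k : ℝ) - 1) * (x ^ k * (1 - x) ^ (b - k)) := by
    intro k hk
    rw [← pow_sub_mul_pow x (mem_Icc.1 hk).1]
    ring
  rw [gamPoly, mul_sum, sum_congr rfl hterm]
  norm_num at hsum
  linarith

lemma gamPoly_le_succ {b : ℕ} (hb : 2 ≤ b) {x : ℝ} (hx : x ∈ Set.Icc 0 1) :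
    gamPoly b x ≤ gamPoly (b + 1) x := by
  have hIoc : ∀ y ∈ Set.Ioc (0 : ℝ) 1, gamPoly b y ≤ gamPoly (b + 1) y := by
    rintro y ⟨hy0, hy1⟩
    refine le_of_mul_le_mul_left ?_ (pow_pos hy0 2)
    rw [sq_mul_gamPoly hb, sq_mul_gamPoly (by omega), pow_succ]
    have : (1 - y) ^ b ≤ 1 := pow_le_one₀ (by linarith) (by linarith)
    push_cast
    nlinarith
  have hclosed : IsClosed {y : ℝ | gamPoly b y ≤ gamPoly (b + 1) y} :=
    isClosed_le (continuous_gamPoly b) (continuous_gamPoly (b + 1))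
  exact hclosed.closure_subset_iff.2 hIoc (by rwa [closure_Ioc zero_ne_one])

section Measure

variable {μ : Measure ℝ}

lemma gamB_two : gamB μ 2 = μ.real (Set.Icc 0 1) := by
  norm_num [gamB, lamBK]

variable [IsFiniteMeasureOnCompacts μ]

lemma gamB_two_pos (hpos : 0 < μ (Set.Icc 0 1)) : 0 < gamB μ 2 := by
  rw [gamB_two, measureReal_def]
  exact ENNReal.toReal_pos hpos.ne' isCompact_Icc.measure_ne_top

lemma gamB_eq_setIntegral_gamPoly (b : ℕ) :
    gamB μ b = ∫ x in Set.Icc 0 1, gamPoly b x ∂μ := by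
  unfold gamPoly
  rw [integral_finsetSum _ fun k _ => Continuous.integrableOn_Icc (by fun_prop)]
  exact sum_congr rfl fun k _ => (integral_const_mul _ _).symm

lemma gamB_monotoneOn : MonotoneOn (gamB μ) (Set.Ici 2) :=
  monotoneOn_nat_Ici_of_le_succ fun b hb => by
    rw [gamB_eq_setIntegral_gamPoly, gamB_eq_setIntegral_gamPoly]
    exact setIntegral_mono_on (continuous_gamPoly b).integrableOn_Icc
      (continuous_gamPoly (b + 1)).integrableOn_Icc measurableSet_Icc
      fun x hx => gamPoly_le_succ hb hx

end Measure

lemma Monotone.sum_mul_apply_partialSum_le {φ : ℕ → ℝ} (hφ : Monotone φ) (j : ℕ → ℕ) (k : ℕ) :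
    ∑ i ∈ range k, (j i : ℝ) * φ (∑ ℓ ∈ range i, j ℓ) ≤ ∑ t ∈ range (∑ i ∈ range k, j i), φ t := by
  induction k with
  | zero => simp
  | succ k ih =>
    rw [sum_range_succ, sum_range_succ j, sum_range_add]
    refine add_le_add ih ?_
    simpa using card_nsmul_le_sum (range (j k)) _ _ fun t _ => hφ (Nat.le_add_right _ t)

lemma sum_range_mul_add_apply_div {M : Type*} [AddCommMonoid M] (g : ℕ → M) {υ r : ℕ}
    (hυ : 0 < υ) (hr : r ≤ υ) (n : ℕ) :
    ∑ s ∈ range (n * υ + r), g (s / υ) = υ • ∑ b ∈ range n, g b + r • g n := by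
  have hblock : ∀ n r, r ≤ υ → ∑ s ∈ range r, g ((n * υ + s) / υ) = r • g n := by
    intro n r hr
    rw [sum_congr rfl fun s hs => by
      rw [mul_comm, Nat.mul_add_div hυ, Nat.div_eq_of_lt ((mem_range.1 hs).trans_le hr), add_zero],
      sum_const, card_range]
  induction n generalizing r with
  | zero => simpa using hblock 0 r hr
  | succ n ih =>
    rw [sum_range_add, hblock _ _ hr, add_mul, one_mul, ih le_rfl, sum_range_succ, smul_add]

lemma sum_range_apply_sub_add_apply_zero {M : Type*} [AddCommMonoid M] (f : ℕ → M) (m : ℕ) :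
    ∑ t ∈ range m, f (m - t) + f 0 = ∑ s ∈ range (m + 1), f s := by
  rw [sum_range_succ', ← sum_range_reflect]
  congr 1
  exact sum_congr rfl fun t ht => by rw [mem_range] at ht; congr 1; omega

lemma sum_mul_apply_sub_partialSum_div_le {w : ℕ → ℝ} (hw : Antitone w) (hw0 : ∀ b, 0 ≤ w b)
    {υ m n : ℕ} (hυ : 0 < υ) (hm1 : n * υ ≤ m) (hm2 : m < (n + 1) * υ) (j : ℕ → ℕ) {k : ℕ}
    (hsum : ∑ i ∈ range k, j i ≤ m) :
    ∑ i ∈ range k, (j i : ℝ) * w ((m - ∑ ℓ ∈ range i, j ℓ) / υ) + w 0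
      ≤ υ * ∑ b ∈ range n, w b + ((m + 1 - n * υ : ℕ) : ℝ) * w n := by
  have hφ : Monotone fun t => w ((m - t) / υ) := fun s t hst =>
    hw (Nat.div_le_div_right (Nat.sub_le_sub_left hst m))
  have hm : m + 1 = n * υ + (m + 1 - n * υ) := by omega
  have hr : m + 1 - n * υ ≤ υ := by rw [add_one_mul] at hm2; omega
  calc _ ≤ ∑ t ∈ range (∑ i ∈ range k, j i), w ((m - t) / υ) + w (0 / υ) :=
        add_le_add (hφ.sum_mul_apply_partialSum_le j k) (by rw [Nat.zero_div])
    _ ≤ ∑ t ∈ range m, w ((m - t) / υ) + w (0 / υ) :=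
        add_le_add (sum_le_sum_of_subset_of_nonneg (range_subset_range.2 hsum)
          fun t _ _ => hw0 _) le_rfl
    _ = ∑ s ∈ range (n * υ + (m + 1 - n * υ)), w (s / υ) := by
        rw [sum_range_apply_sub_add_apply_zero (fun s => w (s / υ)), ← hm]
    _ = _ := by rw [sum_range_mul_add_apply_div _ hυ hr, nsmul_eq_mul, nsmul_eq_mul]

theorem sum_div_le_of_monotoneOn {γ : ℕ → ℝ} (hγ : MonotoneOn γ (Set.Ici 2)) (hγ2 : 0 < γ 2)
    {υ m n : ℕ} (hυ : 1 ≤ υ) (hn : 2 ≤ n) (hm1 : n * υ ≤ m) (hm2 : m < (n + 1) * υ)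
    {k : ℕ} (j : ℕ → ℕ) (hsum1 : ∑ i ∈ range (k - 1), j i < m - 2 * υ)
    (hsum : ∑ i ∈ range k, j i ≤ m) :
    ∑ i ∈ range k, (j i : ℝ) / γ ((m - ∑ ℓ ∈ range i, j ℓ) / υ)
      ≤ ((m : ℝ) - n * υ) / γ n + ∑ b ∈ Icc 2 (n - 1), (υ : ℝ) / γ b + 2 * υ / γ 2 := by
  have hγpos : ∀ b, 2 ≤ b → 0 < γ b := fun b hb => hγ2.trans_le (hγ Set.self_mem_Ici hb hb)
  set w : ℕ → ℝ := fun b => (γ (max 2 b))⁻¹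
  have hw : Antitone w := fun a b hab => inv_anti₀ (hγpos _ (le_max_left 2 a))
    (hγ (le_max_left 2 a) (le_max_left 2 b) (max_le_max le_rfl hab))
  have hw0 : ∀ b, 0 ≤ w b := fun b => (inv_pos.2 (hγpos _ (le_max_left 2 b))).le
  have hw_of_two_le : ∀ b, 2 ≤ b → w b = (γ b)⁻¹ := fun b hb => by simp only [w, max_eq_right hb]
  have hterm : ∀ i ∈ range k, (j i : ℝ) / γ ((m - ∑ ℓ ∈ range i, j ℓ) / υ)
      = j i * w ((m - ∑ ℓ ∈ range i, j ℓ) / υ) := by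
    intro i hi
    have hS : ∑ ℓ ∈ range i, j ℓ ≤ ∑ ℓ ∈ range (k - 1), j ℓ :=
      sum_le_sum_of_subset (range_subset_range.2 (by rw [mem_range] at hi; omega))
    rw [hw_of_two_le _ ((Nat.le_div_iff_mul_le hυ).2 (by omega)), div_eq_mul_inv]
  have hw_zero : w 0 = (γ 2)⁻¹ := rfl
  have hrange : ∑ b ∈ range n, w b = 2 * (γ 2)⁻¹ + ∑ b ∈ Icc 2 (n - 1), (γ b)⁻¹ := by
    rw [← sum_range_add_sum_Ico _ hn, ← Ico_add_one_right_eq_Icc, Nat.sub_add_cancel (by omega),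
      sum_congr rfl fun b hb => hw_of_two_le b (mem_Ico.1 hb).1, sum_range_succ, sum_range_one,
      hw_zero, show w 1 = (γ 2)⁻¹ from rfl]
    ring
  have hcast : ((m + 1 - n * υ : ℕ) : ℝ) = m - n * υ + 1 := by
    rw [Nat.cast_sub (by omega)]; push_cast; ring
  -- absorbs the `+ 1` of the last block into the `2υ/γ₂` term
  have hwn : (γ n)⁻¹ ≤ (γ 2)⁻¹ := inv_anti₀ hγ2 (hγ Set.self_mem_Ici hn hn)
  have hcount := sum_mul_apply_sub_partialSum_div_le hw hw0 hυ hm1 hm2 j hsum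
  rw [hrange, hcast, hw_of_two_le n hn, hw_zero] at hcount
  rw [sum_congr rfl hterm]
  simp only [div_eq_mul_inv, ← mul_sum]
  linear_combination hcount + hwn

theorem gamB_deterministic_sum_bound_general (μ : Measure ℝ) [IsFiniteMeasure μ]
    (hpos : 0 < μ (Set.Icc (0:ℝ) 1))
    (υ m n : ℕ) (hυ : 1 ≤ υ) (hn : 2 ≤ n)
    (hm1 : n * υ ≤ m) (hm2 : m < (n + 1) * υ)
    (k : ℕ) (j : ℕ → ℕ)
    (hsum1 : ∑ i ∈ Finset.range (k - 1), j i < m - 2 * υ)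
    (hsum3 : ∑ i ∈ Finset.range k, j i ≤ m - 1) :
    ∑ i ∈ Finset.range k,
        (j i : ℝ) / gamB μ ((m - ∑ ℓ ∈ Finset.range i, j ℓ) / υ)
      ≤ ((m : ℝ) - (n : ℝ) * (υ : ℝ)) / gamB μ n
        + (∑ b ∈ Finset.Icc 2 (n - 1), (υ : ℝ) / gamB μ b)
        + 2 * (υ : ℝ) / gamB μ 2 :=
  sum_div_le_of_monotoneOn gamB_monotoneOn (gamB_two_pos hpos) hυ hn hm1 hm2 j hsum1
    (hsum3.trans (Nat.sub_le m 1))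

theorem gamB_deterministic_sum_bound (μ : Measure ℝ) [IsFiniteMeasure μ]
    (h0 : μ {0} = 0) (h1 : μ {1} = 0)
    (hsupp : μ ((Set.Icc (0:ℝ) 1)ᶜ) = 0) (hpos : 0 < μ (Set.Icc (0:ℝ) 1))
    (υ m n : ℕ) (hυ : 1 ≤ υ) (hn : 2 ≤ n)
    (hm1 : n * υ ≤ m) (hm2 : m < (n + 1) * υ)
    (k : ℕ) (hk : 1 ≤ k) (j : ℕ → ℕ) (hj : ∀ i, i < k → 1 ≤ j i)
    (hsum1 : ∑ i ∈ Finset.range (k - 1), j i < m - 2 * υ)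
    (hsum2 : m - 2 * υ ≤ ∑ i ∈ Finset.range k, j i)
    (hsum3 : ∑ i ∈ Finset.range k, j i ≤ m - 1) :
    ∑ i ∈ Finset.range k,
        (j i : ℝ) / gamB μ ((m - ∑ ℓ ∈ Finset.range i, j ℓ) / υ)
      ≤ ((m : ℝ) - (n : ℝ) * (υ : ℝ)) / gamB μ n
        + (∑ b ∈ Finset.Icc 2 (n - 1), (υ : ℝ) / gamB μ b)
        + 2 * (υ : ℝ) / gamB μ 2 :=
  gamB_deterministic_sum_bound_general μ hpos υ m n hυ hn hm1 hm2 k j hsum1 hsum3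
end
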